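/- The fuzz update is not associative: there exist 2×2 positive semidefinite matrices ρ, σ, τ (each given by spectral decompositions with nonnegative eigenvalues) such that (ρ ⋆ σ) ⋆ τ ≠ ρ ⋆ (σ ⋆ τ), where ρ ⋆ σ := Σᵢ xᵢ Pᵢ ρ Pᵢ with σ = Σᵢ xᵢ Pᵢ the spectral decomposition of σ into its eigenprojections. -/
import Mathlib


open scoped ComplexOrder
/-- The fuzz update of `ρ` along the spectral data `(x, P)`: `Σᵢ xᵢ Pᵢ ρ Pᵢ`. -/
noncomputable def fuzz {ι : Type*} [Fintype ι] (x : ι → ℝ)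
    (P : ι → Matrix (Fin 2) (Fin 2) ℂ) (ρ : Matrix (Fin 2) (Fin 2) ℂ) :
    Matrix (Fin 2) (Fin 2) ℂ :=
  ∑ i, (x i : ℂ) • (P i * ρ * P i)

/-- `(x, P)` is a spectral decomposition of `σ` into distinct nonnegative eigenvalues
with pairwise orthogonal hermitian eigenprojections resolving the identity. -/
def IsSpectralDecomp {ι : Type*} [Fintype ι] (σ : Matrix (Fin 2) (Fin 2) ℂ)
    (x : ι → ℝ) (P : ι → Matrix (Fin 2) (Fin 2) ℂ) : Prop :=
  (∀ i, 0 ≤ x i) ∧ (∀ i j, i ≠ j → x i ≠ x j) ∧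
  (∀ i, (P i).IsHermitian) ∧ (∀ i, P i * P i = P i) ∧ (∀ i, P i ≠ 0) ∧
  (∀ i j, i ≠ j → P i * P j = 0) ∧ (∑ i, P i = 1) ∧
  σ = ∑ i, (x i : ℂ) • P i

open Matrix in
noncomputable def Pp : Matrix (Fin 2) (Fin 2) ℂ := !![1/2, 1/2; 1/2, 1/2]
noncomputable def Pm : Matrix (Fin 2) (Fin 2) ℂ := !![1/2, -(1/2); -(1/2), 1/2]
noncomputable def P0 : Matrix (Fin 2) (Fin 2) ℂ := !![1, 0; 0, 0]
noncomputable def P1 : Matrix (Fin 2) (Fin 2) ℂ := !![0, 0; 0, 1]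

open Matrix
lemma psd_of_proj {M : Matrix (Fin 2) (Fin 2) ℂ} (hh : Mᴴ = M) (hi : M * M = M) :
    M.PosSemidef := by
  have h : M = Mᴴ * M := by rw [hh, hi]
  rw [h]
  exact Matrix.posSemidef_conjTranspose_mul_self M

lemma hPpne : Pp ≠ 0 := fun h => by simpa [Pp] using congr_fun (congr_fun h 0) 0
lemma hPmne : Pm ≠ 0 := fun h => by simpa [Pm] using congr_fun (congr_fun h 0) 0
lemma hP0ne : P0 ≠ 0 := fun h => by simpa [P0] using congr_fun (congr_fun h 0) 0
lemma hP1ne : P1 ≠ 0 := fun h => by simpa [P1] using congr_fun (congr_fun h 1) 1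

open Matrix in
theorem stmt9 :
    ∃ (ρ σ τ : Matrix (Fin 2) (Fin 2) ℂ), ρ.PosSemidef ∧ σ.PosSemidef ∧ τ.PosSemidef ∧
    ∃ (ι₁ ι₂ ι₃ : Type) (_ : Fintype ι₁) (_ : Fintype ι₂) (_ : Fintype ι₃)
      (y : ι₁ → ℝ) (Q : ι₁ → Matrix (Fin 2) (Fin 2) ℂ)
      (z : ι₂ → ℝ) (R : ι₂ → Matrix (Fin 2) (Fin 2) ℂ)
      (w : ι₃ → ℝ) (S : ι₃ → Matrix (Fin 2) (Fin 2) ℂ),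
      IsSpectralDecomp σ y Q ∧ IsSpectralDecomp τ z R ∧
      IsSpectralDecomp (fuzz z R σ) w S ∧
      fuzz z R (fuzz y Q ρ) ≠ fuzz w S ρ := by
  have hPph : Ppᴴ = Pp := by
    ext i j; fin_cases i <;> fin_cases j <;>
      simp [Pp, Matrix.conjTranspose_apply]
  have hPmh : Pmᴴ = Pm := by
    ext i j; fin_cases i <;> fin_cases j <;>
      simp [Pm, Matrix.conjTranspose_apply]
  have hP0h : P0ᴴ = P0 := by
    ext i j; fin_cases i <;> fin_cases j <;>
      simp [P0, Matrix.conjTranspose_apply]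
  have hP1h : P1ᴴ = P1 := by
    ext i j; fin_cases i <;> fin_cases j <;>
      simp [P1, Matrix.conjTranspose_apply]
  have hPp2 : Pp * Pp = Pp := by
    ext i j; fin_cases i <;> fin_cases j <;>
      simp [Pp, Matrix.mul_apply, Fin.sum_univ_two] <;> norm_num
  have hPm2 : Pm * Pm = Pm := by
    ext i j; fin_cases i <;> fin_cases j <;>
      simp [Pm, Matrix.mul_apply, Fin.sum_univ_two] <;> norm_num
  have hP02 : P0 * P0 = P0 := by
    ext i j; fin_cases i <;> fin_cases j <;>
      simp [P0, Matrix.mul_apply, Fin.sum_univ_two]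
  have hP12 : P1 * P1 = P1 := by
    ext i j; fin_cases i <;> fin_cases j <;>
      simp [P1, Matrix.mul_apply, Fin.sum_univ_two]
  refine ⟨Pp, P0, Pp, psd_of_proj hPph hPp2, psd_of_proj hP0h hP02,
    psd_of_proj hPph hPp2,
    Fin 2, Fin 2, Fin 2, inferInstance, inferInstance, inferInstance,
    ![1, 0], ![P0, P1], ![1, 0], ![Pp, Pm], ![1/2, 0], ![Pp, Pm], ?_, ?_, ?_, ?_⟩
  · refine ⟨?_, ?_, ?_, ?_, ?_, ?_, ?_, ?_⟩
    · intro i; fin_cases i <;> norm_num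
    · intro i j h; fin_cases i <;> fin_cases j <;> simp_all <;> norm_num
    · intro i; fin_cases i <;> simpa [Matrix.IsHermitian] using by assumption'
    · intro i; fin_cases i <;> assumption
    · intro i
      fin_cases i
      · exact hP0ne
      · exact hP1ne
    · intro i j hij; fin_cases i <;> fin_cases j
      · exact absurd rfl hij
      · ext a b; fin_cases a <;> fin_cases b <;>
          simp [P0, P1, Matrix.mul_apply, Fin.sum_univ_two]
      · ext a b; fin_cases a <;> fin_cases b <;>
          simp [P0, P1, Matrix.mul_apply, Fin.sum_univ_two]
      · exact absurd rfl hij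
    · ext a b; fin_cases a <;> fin_cases b <;>
        simp [P0, P1, Fin.sum_univ_two, Matrix.sum_apply, Matrix.one_apply]
    · ext a b; fin_cases a <;> fin_cases b <;>
        simp [P0, P1, Fin.sum_univ_two, Matrix.sum_apply]
  · refine ⟨?_, ?_, ?_, ?_, ?_, ?_, ?_, ?_⟩
    · intro i; fin_cases i <;> norm_num
    · intro i j h; fin_cases i <;> fin_cases j <;> simp_all <;> norm_num
    · intro i; fin_cases i <;> simpa [Matrix.IsHermitian] using by assumption'
    · intro i; fin_cases i <;> assumption
    · intro i
      fin_cases i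
      · exact hPpne
      · exact hPmne
    · intro i j hij; fin_cases i <;> fin_cases j
      · exact absurd rfl hij
      · ext a b; fin_cases a <;> fin_cases b <;>
          simp [Pp, Pm, Matrix.mul_apply, Fin.sum_univ_two] <;> norm_num
      · ext a b; fin_cases a <;> fin_cases b <;>
          simp [Pp, Pm, Matrix.mul_apply, Fin.sum_univ_two] <;> norm_num
      · exact absurd rfl hij
    · ext a b; fin_cases a <;> fin_cases b <;>
        simp [Pp, Pm, Fin.sum_univ_two, Matrix.sum_apply, Matrix.one_apply] <;> norm_num
    · ext a b; fin_cases a <;> fin_cases b <;>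
        simp [Pp, Pm, Fin.sum_univ_two, Matrix.sum_apply] <;> norm_num
  · refine ⟨?_, ?_, ?_, ?_, ?_, ?_, ?_, ?_⟩
    · intro i; fin_cases i <;> norm_num
    · intro i j h; fin_cases i <;> fin_cases j <;> simp_all <;> norm_num
    · intro i; fin_cases i <;> simpa [Matrix.IsHermitian] using by assumption'
    · intro i; fin_cases i <;> assumption
    · intro i
      fin_cases i
      · exact hPpne
      · exact hPmne
    · intro i j hij; fin_cases i <;> fin_cases j
      · exact absurd rfl hij
      · ext a b; fin_cases a <;> fin_cases b <;>
          simp [Pp, Pm, Matrix.mul_apply, Fin.sum_univ_two] <;> norm_num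
      · ext a b; fin_cases a <;> fin_cases b <;>
          simp [Pp, Pm, Matrix.mul_apply, Fin.sum_univ_two] <;> norm_num
      · exact absurd rfl hij
    · ext a b; fin_cases a <;> fin_cases b <;>
        simp [Pp, Pm, Fin.sum_univ_two, Matrix.sum_apply, Matrix.one_apply] <;> norm_num
    · ext a b; fin_cases a <;> fin_cases b <;>
        simp [fuzz, Pp, Pm, P0, Fin.sum_univ_two, Matrix.sum_apply, Matrix.smul_apply,
          Matrix.mul_apply] <;> norm_num
  · intro h
    have h00 := congr_fun (congr_fun h 0) 0
    simp [fuzz, Pp, Pm, P0, Fin.sum_univ_two, Matrix.sum_apply, Matrix.smul_apply,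
      Matrix.mul_apply] at h00
    norm_num at h00
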